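/- arXiv:2512.06273 — 2 statements merged into one kernel-verified Lean document; each statement's English description precedes it below -/
import Mathlib

section
/- The charge statistic on Sₙ is Mahonian: Σ_{w ∈ Sₙ} q^{c(w)} = [n]_q!. -/
/-!
Unwinding the recursion, `cᵢ(w)` counts the `k < i` such that `k + 1` stands to the left of `k`
in `w`, i.e. the descents of `w⁻¹` below `i`. Summing over `i`, `c(w) = Σₖ (n - k)·[k ∈ Des(w⁻¹)]`
is the comajor index of `w⁻¹`. Conjugating by the reversal `k ↦ n + 1 - k` turns the comajor index
into the major index, and the major index is Mahonian by MacMahon's insertion argument: inserting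
the letter `n` into the `n` gaps of `v ∈ Sₙ₋₁` raises `maj v` by `0, 1, …, n - 1`, each exactly once.
-/

/-- `lIdx n w k` is the (0-based) position of the (0-based) value `k` in `w`,
i.e. `w⁻¹(k+1)` in 1-based notation. -/
def lIdx (n : ℕ) (w : Equiv.Perm (Fin n)) (k : ℕ) : ℕ :=
  if h : k < n then (w.symm ⟨k, h⟩ : ℕ) else 0

/-- The charge labels: `c₁(w) = 0` and for `i ≥ 2`,
`cᵢ(w) = c_{i-1}(w) + 1` if `w⁻¹(i) < w⁻¹(i-1)`, else `cᵢ(w) = c_{i-1}(w)`. -/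
def chargeLabel (n : ℕ) (w : Equiv.Perm (Fin n)) : ℕ → ℕ
  | 0 => 0
  | 1 => 0
  | (i + 2) => chargeLabel n w (i + 1) + (if lIdx n w (i + 1) < lIdx n w i then 1 else 0)

/-- The charge `c(w) = Σ_{i=1}^{n} cᵢ(w)`. -/
def charge (n : ℕ) (w : Equiv.Perm (Fin n)) : ℕ :=
  ∑ i ∈ Finset.Icc 1 n, chargeLabel n w i

open Finset

/-- The one-line notation of `w`, 0-based, with the junk value `0` at positions `k ≥ n`. -/
def oneLine (n : ℕ) (w : Equiv.Perm (Fin n)) (k : ℕ) : ℕ :=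
  if h : k < n then (w ⟨k, h⟩ : ℕ) else 0

def descInd (n : ℕ) (w : Equiv.Perm (Fin n)) (j : ℕ) : ℕ :=
  if oneLine n w (j + 1) < oneLine n w j then 1 else 0

def maj (n : ℕ) (w : Equiv.Perm (Fin n)) : ℕ :=
  ∑ j ∈ range (n - 1), (j + 1) * descInd n w j

def comaj (n : ℕ) (w : Equiv.Perm (Fin n)) : ℕ :=
  ∑ j ∈ range (n - 1), (n - 1 - j) * descInd n w j

lemma descInd_le_one (n : ℕ) (w : Equiv.Perm (Fin n)) (j : ℕ) : descInd n w j ≤ 1 := by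
  unfold descInd; split <;> omega

lemma oneLine_lt {n : ℕ} (w : Equiv.Perm (Fin n)) {k : ℕ} (hk : k < n) : oneLine n w k < n := by
  rw [oneLine, dif_pos hk]; exact (w ⟨k, hk⟩).isLt

lemma sum_comp_eq_sum_range_of_injective {M : Type*} [AddCommMonoid M] {n : ℕ} {f : Fin n → ℕ}
    (hf : Function.Injective f) (hlt : ∀ i, f i < n) (φ : ℕ → M) :
    ∑ i, φ (f i) = ∑ k ∈ range n, φ k := by
  have himage : univ.image f = range n :=
    eq_of_subset_of_card_le (fun k hk => by obtain ⟨i, -, rfl⟩ := mem_image.mp hk; simp [hlt])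
      (by simp [card_image_of_injective _ hf])
  rw [← himage, sum_image hf.injOn]

lemma sum_range_sum_range_eq_sum_nsmul {M : Type*} [AddCommMonoid M] (n : ℕ) (f : ℕ → M) :
    ∑ i ∈ range n, ∑ k ∈ range i, f k = ∑ k ∈ range n, (n - 1 - k) • f k := by
  induction n with
  | zero => simp
  | succ n ih =>
    rw [sum_range_succ, ih, sum_range_succ _ n, Nat.add_sub_cancel, Nat.sub_self, zero_smul,
      add_zero, ← sum_add_distrib]
    refine sum_congr rfl fun k hk => ?_
    rw [show n - k = (n - 1 - k) + 1 by have := mem_range.mp hk; omega, succ_nsmul]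

section insertMax

variable {m : ℕ} (v : Equiv.Perm (Fin m)) (g : Fin (m + 1))

/-- Insert the new largest value `m` into the one-line notation of `v` at position `g`. -/
def insertMax : Equiv.Perm (Fin (m + 1)) :=
  ((finSuccEquiv' g).trans (Equiv.optionCongr v)).trans finSuccEquivLast.symm

@[simp]
lemma insertMax_apply_self : insertMax v g g = Fin.last m := by
  simp [insertMax]

@[simp]
lemma insertMax_apply_succAbove (j : Fin m) : insertMax v g (g.succAbove j) = (v j).castSucc := by
  simp [insertMax]

lemma insertMax_bijective :
    Function.Bijective (fun p : Equiv.Perm (Fin m) × Fin (m + 1) => insertMax p.1 p.2) := by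
  rw [Fintype.bijective_iff_injective_and_card]
  refine ⟨?_, by simp [Fintype.card_perm, Nat.factorial_succ, Nat.mul_comm]⟩
  rintro ⟨v, g⟩ ⟨v', g'⟩ h
  simp only at h
  obtain rfl : g = g' := (insertMax v g).injective <| by
    rw [insertMax_apply_self, h, insertMax_apply_self]
  obtain rfl : v = v' := Equiv.ext fun j => Fin.castSucc_injective _ <| by
    rw [← insertMax_apply_succAbove v g j, h, insertMax_apply_succAbove]
  rfl

lemma oneLine_insertMax_of_lt {k : ℕ} (hk : k < g) :
    oneLine (m + 1) (insertMax v g) k = oneLine m v k := by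
  have hkm : k < m := by omega
  have hpos : g.succAbove ⟨k, hkm⟩ = ⟨k, by omega⟩ :=
    Fin.succAbove_of_castSucc_lt _ _ (by simpa [Fin.lt_def] using hk)
  rw [oneLine, oneLine, dif_pos (by omega), dif_pos hkm, ← hpos, insertMax_apply_succAbove]
  rfl

lemma oneLine_insertMax_self : oneLine (m + 1) (insertMax v g) g = m := by
  simp [oneLine, g.isLt]

lemma oneLine_insertMax_of_gt {k : ℕ} (hk : g < k) (hkm : k ≤ m) :
    oneLine (m + 1) (insertMax v g) k = oneLine m v (k - 1) := by
  have hkm' : k - 1 < m := by omega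
  have hpos : g.succAbove ⟨k - 1, hkm'⟩ = ⟨k, by omega⟩ := by
    rw [Fin.succAbove_of_le_castSucc _ _ (by simp [Fin.le_iff_val_le_val]; omega)]
    ext; simp; omega
  rw [oneLine, oneLine, dif_pos (by omega), dif_pos hkm', ← hpos, insertMax_apply_succAbove]
  rfl

lemma descInd_insertMax_of_lt {j : ℕ} (hj : j + 1 < g) :
    descInd (m + 1) (insertMax v g) j = descInd m v j := by
  rw [descInd, descInd, oneLine_insertMax_of_lt v g hj, oneLine_insertMax_of_lt v g (by omega)]

lemma descInd_insertMax_pred {j : ℕ} (hj : j + 1 = g) : descInd (m + 1) (insertMax v g) j = 0 := by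
  have := oneLine_lt v (k := j) (by omega)
  rw [descInd, hj, oneLine_insertMax_self, oneLine_insertMax_of_lt v g (by omega), if_neg (by omega)]

lemma descInd_insertMax_self (hg : (g : ℕ) < m) : descInd (m + 1) (insertMax v g) g = 1 := by
  have := oneLine_lt v hg
  rw [descInd, oneLine_insertMax_self, oneLine_insertMax_of_gt v g (by omega) (by omega),
    Nat.add_sub_cancel, if_pos this]

lemma descInd_insertMax_of_gt {j : ℕ} (hj : g < j) (hjm : j < m) :
    descInd (m + 1) (insertMax v g) j = descInd m v (j - 1) := by
  rw [descInd, descInd, oneLine_insertMax_of_gt v g (by omega) (by omega),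
    oneLine_insertMax_of_gt v g hj (by omega), show j + 1 - 1 = j - 1 + 1 by omega]

end insertMax

section majIncrement

variable {m : ℕ} (v : Equiv.Perm (Fin m))

def descCountFrom (g : ℕ) : ℕ :=
  ∑ j ∈ Ico g (m - 1), descInd m v j

lemma descCountFrom_le (g : ℕ) : descCountFrom v g ≤ m - 1 - g := by
  simpa [descCountFrom, Nat.card_Ico] using sum_le_card_nsmul (Ico g (m - 1)) _ 1 fun j _ => descInd_le_one m v j

lemma maj_insertMax_last : maj (m + 1) (insertMax v (Fin.last m)) = maj m v := by
  rcases m with _ | m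
  · simp [maj]
  · simp only [maj, Nat.add_sub_cancel]
    rw [sum_range_succ, descInd_insertMax_pred v _ (by simp), mul_zero, add_zero]
    refine sum_congr rfl fun j hj => ?_
    rw [descInd_insertMax_of_lt v _ (by simpa using hj)]

lemma maj_insertMax_of_lt (g : Fin (m + 1)) (hg : (g : ℕ) < m) :
    maj (m + 1) (insertMax v g) + g * descInd m v (g - 1) =
      maj m v + descCountFrom v g + (g + 1) := by
  set d' := descInd (m + 1) (insertMax v g)
  set d := descInd m v
  have hprefix : ∑ j ∈ range g, (j + 1) * d' j + g * d (g - 1) = ∑ j ∈ range g, (j + 1) * d j := by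
    obtain hg0 | hg0 := Nat.eq_zero_or_pos (g : ℕ)
    · simp [hg0]
    obtain ⟨p, hp⟩ : ∃ p, (g : ℕ) = p + 1 := ⟨g - 1, by omega⟩
    have hd'p : d' p = 0 := descInd_insertMax_pred v g hp.symm
    rw [hp, sum_range_succ, sum_range_succ, hd'p, Nat.add_sub_cancel, mul_zero, add_zero]
    refine congrArg (· + _) (sum_congr rfl fun j hj => ?_)
    have hd'j : d' j = d j := descInd_insertMax_of_lt v g (by have := mem_range.mp hj; omega)
    rw [hd'j]
  have hsuffix : ∑ j ∈ Ico ((g : ℕ) + 1) m, (j + 1) * d' j =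
      ∑ j ∈ Ico (g : ℕ) (m - 1), (j + 1) * d j + descCountFrom v g := by
    have hshift := sum_Ico_add' (fun j => (j + 1) * d' j) g (m - 1) 1
    rw [Nat.sub_add_cancel (by omega)] at hshift
    rw [← hshift, descCountFrom, ← sum_add_distrib]
    refine sum_congr rfl fun j hj => ?_
    have hj' := mem_Ico.mp hj
    have hd'j : d' (j + 1) = d j := descInd_insertMax_of_gt v g (by omega) (by omega)
    rw [hd'j]
    ring
  have hsplit_ins : maj (m + 1) (insertMax v g) =
      ∑ j ∈ range g, (j + 1) * d' j + (g + 1) + ∑ j ∈ Ico ((g : ℕ) + 1) m, (j + 1) * d' j := by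
    rw [maj, Nat.add_sub_cancel, ← sum_range_add_sum_Ico _ (show (g : ℕ) + 1 ≤ m by omega),
      sum_range_succ, descInd_insertMax_self v g hg, mul_one]
  have hsplit : maj m v = ∑ j ∈ range g, (j + 1) * d j + ∑ j ∈ Ico (g : ℕ) (m - 1), (j + 1) * d j :=
    (sum_range_add_sum_Ico _ (by omega)).symm
  omega

/-- The increase of `maj` when `m` is inserted at gap `g`: the last gap gets `0`, the descent gaps
`1, 2, …` from right to left, and the other gaps the remaining values from left to right. -/
def majIncrement (g : ℕ) : ℕ :=
  if g = m then 0
  else if 0 < g ∧ descInd m v (g - 1) = 1 then descCountFrom v g + 1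
  else descCountFrom v g + g + 1

lemma maj_insertMax (g : Fin (m + 1)) :
    maj (m + 1) (insertMax v g) = maj m v + majIncrement v g := by
  obtain rfl | hg := (Fin.le_last g).eq_or_lt
  · rw [maj_insertMax_last, majIncrement, Fin.val_last, if_pos rfl, add_zero]
  have hgm : (g : ℕ) < m := hg
  have key := maj_insertMax_of_lt v g hgm
  have hd := descInd_le_one m v (g - 1)
  rw [majIncrement, if_neg hgm.ne]
  split_ifs with hdesc
  · rw [hdesc.2, mul_one] at key
    omega
  · have hzero : (g : ℕ) * descInd m v (g - 1) = 0 := Nat.mul_eq_zero.mpr (by omega)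
    omega

lemma majIncrement_lt {g : ℕ} (hg : g ≤ m) : majIncrement v g < m + 1 := by
  have := descCountFrom_le v g
  unfold majIncrement
  split_ifs <;> omega

lemma majIncrement_ne_of_lt {g g' : ℕ} (h : g < g') (h' : g' ≤ m) :
    majIncrement v g ≠ majIncrement v g' := by
  obtain ⟨q, rfl⟩ : ∃ q, g' = q + 1 := ⟨g' - 1, by omega⟩
  have hq := descInd_le_one m v q
  obtain h' | h' := h'.eq_or_lt
  · rw [majIncrement, majIncrement, if_pos h', if_neg (show g ≠ m by omega)]
    split_ifs <;> omega
  have hsplit : descCountFrom v g =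
      ∑ j ∈ Ico g q, descInd m v j + descInd m v q + descCountFrom v (q + 1) := by
    rw [descCountFrom, descCountFrom, ← sum_Ico_succ_top (by omega),
      sum_Ico_consecutive _ (by omega) (by omega)]
  have hbetween : ∑ j ∈ Ico g q, descInd m v j ≤ q - g := by
    simpa [Nat.card_Ico] using sum_le_card_nsmul (Ico g q) _ 1 fun j _ => descInd_le_one m v j
  rw [majIncrement, majIncrement, if_neg (show g ≠ m by omega), if_neg (show q + 1 ≠ m by omega),
    Nat.add_sub_cancel]
  split_ifs <;> omega

lemma majIncrement_injective : Function.Injective fun g : Fin (m + 1) => majIncrement v g := by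
  intro g g' h
  by_contra hne
  obtain hlt | hlt := Fin.lt_or_lt_of_ne hne
  · exact majIncrement_ne_of_lt v hlt (by omega) h
  · exact majIncrement_ne_of_lt v hlt (by omega) h.symm

end majIncrement

theorem sum_pow_maj {R : Type*} [CommSemiring R] (x : R) (n : ℕ) :
    ∑ w : Equiv.Perm (Fin n), x ^ maj n w = ∏ k ∈ range n, ∑ i ∈ range (k + 1), x ^ i := by
  induction n with
  | zero => simp [maj]
  | succ m ih =>
    rw [prod_range_succ, ← ih, ← (insertMax_bijective (m := m)).sum_comp (x ^ maj (m + 1) ·),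
      Fintype.sum_prod_type, sum_mul]
    refine sum_congr rfl fun v _ => ?_
    rw [← sum_comp_eq_sum_range_of_injective (majIncrement_injective v)
      (fun g => majIncrement_lt v (by omega)), mul_sum]
    simp only [maj_insertMax, pow_add]

lemma chargeLabel_succ (n : ℕ) (w : Equiv.Perm (Fin n)) (i : ℕ) :
    chargeLabel n w (i + 1) = ∑ k ∈ range i, descInd n w.symm k := by
  induction i with
  | zero => rfl
  | succ i ih => rw [chargeLabel, ih, sum_range_succ]; rfl

lemma charge_eq_comaj_symm (n : ℕ) (w : Equiv.Perm (Fin n)) : charge n w = comaj n w.symm := by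
  have hshift : charge n w = ∑ i ∈ range n, chargeLabel n w (i + 1) := by
    rw [charge, ← Ico_add_one_right_eq_Icc, sum_Ico_eq_sum_range, Nat.add_sub_cancel]
    simp only [add_comm 1]
  rw [hshift]
  simp only [chargeLabel_succ, sum_range_sum_range_eq_sum_nsmul, smul_eq_mul, comaj]
  rcases n with _ | n
  · rfl
  · rw [sum_range_succ, Nat.add_sub_cancel, Nat.sub_self, zero_mul, add_zero]

lemma oneLine_conj_revPerm {n : ℕ} (u : Equiv.Perm (Fin n)) {k : ℕ} (hk : k < n) :
    oneLine n (MulAut.conj Fin.revPerm u) k = n - 1 - oneLine n u (n - 1 - k) := by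
  have hrev : Fin.rev (⟨k, hk⟩ : Fin n) = ⟨n - 1 - k, by omega⟩ := by ext; simp; omega
  rw [oneLine, oneLine, dif_pos hk, dif_pos (by omega), MulAut.conj_apply, Equiv.Perm.inv_def,
    Fin.revPerm_symm, Equiv.Perm.mul_apply, Equiv.Perm.mul_apply, Fin.revPerm_apply,
    Fin.revPerm_apply, hrev, Fin.val_rev]
  omega

lemma descInd_conj_revPerm {n : ℕ} (u : Equiv.Perm (Fin n)) {j : ℕ} (hj : j + 1 < n) :
    descInd n (MulAut.conj Fin.revPerm u) j = descInd n u (n - 2 - j) := by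
  have h₁ := oneLine_lt u (k := n - 1 - j) (by omega)
  have h₂ := oneLine_lt u (k := n - 2 - j) (by omega)
  rw [descInd, descInd, oneLine_conj_revPerm u hj, oneLine_conj_revPerm u (by omega),
    show n - 1 - (j + 1) = n - 2 - j by omega, show n - 2 - j + 1 = n - 1 - j by omega]
  congr 1
  exact propext (by omega)

lemma comaj_eq_maj_conj_revPerm (n : ℕ) (u : Equiv.Perm (Fin n)) :
    comaj n u = maj n (MulAut.conj Fin.revPerm u) := by
  rw [comaj, maj, ← sum_range_reflect]
  refine sum_congr rfl fun j hj => ?_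
  have := mem_range.mp hj
  rw [descInd_conj_revPerm u (by omega), show n - 1 - (n - 1 - 1 - j) = j + 1 by omega,
    show n - 1 - 1 - j = n - 2 - j by omega]

/-- Charge is Mahonian: `Σ_{w ∈ Sₙ} q^{c(w)} = [n]_q!`. -/
theorem stmt7 (n : ℕ) :
    ∑ w : Equiv.Perm (Fin n), (Polynomial.X : Polynomial ℤ) ^ charge n w =
      ∏ k ∈ Finset.range n, ∑ i ∈ Finset.range (k + 1), (Polynomial.X : Polynomial ℤ) ^ i := by
  have hbij : Function.Bijective fun w : Equiv.Perm (Fin n) => MulAut.conj Fin.revPerm w.symm :=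
    (MulAut.conj _).bijective.comp Equiv.symm_bijective
  simp only [charge_eq_comaj_symm, comaj_eq_maj_conj_revPerm]
  rw [hbij.sum_comp (Polynomial.X ^ maj n ·), sum_pow_maj]
end

section
/- Let λ = (c, c, ..., c) be a rectangular partition with c ≥ 2 and at least 2 rows, of size n. Then no standard Young tableau of shape λ has depth equal to dep(λ) + 1, where dep is applied to the descent composition; i.e., the coefficient of q^{dep(λ)+1} in the fake degree polynomial f_λ(q) = Σ_{T ∈ ST(λ)} q^{dep(des T)} is zero. -/
/-- A standard Young tableau with `n` boxes, encoded by the positions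
`pos 0, …, pos (n-1)` of the entries `1, …, n` (rows and columns 0-indexed,
coordinates `(row, column)`).  The conditions say: the positions are distinct, their
set is a Young diagram (down-closed), and entries increase along rows and columns. -/
def IsSYT (n : ℕ) (pos : Fin n → Fin n × Fin n) : Prop :=
  Function.Injective pos ∧
  (∀ (i : Fin n) (a b : Fin n), a ≤ (pos i).1 → b ≤ (pos i).2 → ∃ j, pos j = (a, b)) ∧
  (∀ i j : Fin n,
    (((pos i).1 = (pos j).1 ∧ (pos i).2 < (pos j).2) ∨
     ((pos i).2 = (pos j).2 ∧ (pos i).1 < (pos j).1)) → i < j)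

instance (n : ℕ) : DecidablePred (IsSYT n) := fun _ => by
  unfold IsSYT; infer_instance

/-- The type of standard Young tableaux with `n` boxes. -/
abbrev SYT (n : ℕ) := {pos : Fin n → Fin n × Fin n // IsSYT n pos}

/-- The length of row `r` of `T`. -/
def rowLen (n : ℕ) (T : SYT n) (r : Fin n) : ℕ :=
  (Finset.univ.filter fun i => (T.1 i).1 = r).card

/-- The multiset of (nonzero) row lengths of `T`: its shape as a partition. -/
def rowMult (n : ℕ) (T : SYT n) : Multiset ℕ :=
  ((Finset.univ : Finset (Fin n)).val.map (rowLen n T)).filter (fun x => 0 < x)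

/-- The descent set of `T` as a subset of `Fin (n-1)`: `i` records the 1-based
descent `i+1`, i.e. entry `i+2` lies in a strictly lower row than entry `i+1`. -/
def desSet (n : ℕ) (T : SYT n) : Finset (Fin (n - 1)) :=
  Finset.univ.filter fun i =>
    (T.1 ⟨(i : ℕ), by have := i.isLt; omega⟩).1 <
      (T.1 ⟨(i : ℕ) + 1, by have := i.isLt; omega⟩).1

/-- The descent composition of `T`: the composition of `n` whose partial sums are the
elements of the descent set of `T`. -/
def desComp (n : ℕ) (T : SYT n) : Composition n :=
  ((compositionAsSetEquiv n).symm (desSet n T)).toComposition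

/-- The depth of a composition: `dep α = Σᵢ (i-1)·αᵢ`. -/
def depC {n : ℕ} (α : Composition n) : ℕ :=
  ∑ i : Fin α.length, (i : ℕ) * α.blocksFun i

/-!
Let `R k` be the row of entry `k` and `D k` the number of descents among the first `k` entries.
Then `dep (des T) = ∑ₖ D k`, while `∑ₖ R k = dep λ`, and `R k ≤ D k` because the entry above `k`
is smaller and the row can only grow from it to `k` through a descent. Depth `dep λ + 1` therefore
forces `D = R` except at a single entry `K`, where `D K = R K + 1`. Comparing with `K - 1` and
`K + 1` shows that entry `K - 1` lies one row below `K` while every later entry lies at least two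
rows below `K`. So the cell directly below `K` is empty although the row below `K` is not: that
row is shorter than the row of `K`, which is impossible in a rectangle.
-/

open Finset

theorem Fin.mem_iff_lt_card_of_isLowerSet {n : ℕ} {s : Finset (Fin n)}
    (hs : IsLowerSet (s : Set (Fin n))) {x : Fin n} : x ∈ s ↔ (x : ℕ) < #s := by
  rcases hs.eq_univ_or_Iio with h | ⟨a, h⟩
  · rw [coe_eq_univ] at h
    simp [h, x.isLt]
  · rw [← coe_Iio, coe_inj] at h
    simp [h]

theorem Finset.exists_eq_add_one_of_sum_eq_sum_add_one {ι : Type*} {s : Finset ι}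
    {f g : ι → ℕ} (hle : ∀ i ∈ s, g i ≤ f i)
    (hsum : ∑ i ∈ s, f i = ∑ i ∈ s, g i + 1) :
    ∃ K ∈ s, f K = g K + 1 ∧ ∀ i ∈ s, i ≠ K → f i = g i := by
  classical
  have hexcess : ∑ i ∈ s, (f i - g i) = 1 := by
    rw [sum_tsub_distrib s hle, hsum, add_tsub_cancel_left]
  obtain ⟨K, hK, hKpos⟩ : ∃ K ∈ s, f K - g K ≠ 0 := by
    by_contra! h
    rw [sum_eq_zero h] at hexcess
    exact zero_ne_one hexcess
  have hrest : ∑ i ∈ s.erase K, (f i - g i) = 0 := by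
    have := add_sum_erase s (fun i => f i - g i) hK
    omega
  refine ⟨K, hK, ?_, fun i hi hiK => ?_⟩
  · have := add_sum_erase s (fun i => f i - g i) hK
    have := hle K hK
    omega
  · have := sum_eq_zero_iff.1 hrest i (mem_erase.2 ⟨hiK, hi⟩)
    have := hle i hi
    omega

namespace Composition

variable {n : ℕ} (α : Composition n)

theorem depC_eq_sum_index : depC α = ∑ j, (α.index j : ℕ) := by
  rw [depC, ← α.blocksFinEquiv.sum_comp, Fintype.sum_sigma]
  refine Fintype.sum_congr _ _ fun i => ?_
  simp [blocksFinEquiv, mul_comm]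

theorem sizeUpTo_le_iff_le_index (t : ℕ) (j : Fin n) :
    α.sizeUpTo t ≤ j ↔ t ≤ α.index j := by
  refine ⟨fun h => ?_, fun h => (α.monotone_sizeUpTo h).trans (α.sizeUpTo_index_le j)⟩
  by_contra! hlt
  have h1 : α.sizeUpTo (α.index j + 1) ≤ α.sizeUpTo t := α.monotone_sizeUpTo hlt
  have h2 : (j : ℕ) < α.sizeUpTo (α.index j + 1) := by simpa using α.lt_sizeUpTo_index_succ j
  omega

theorem index_add_one_eq_card_boundaries (j : Fin n) :
    (α.index j : ℕ) + 1 = #{b ∈ α.boundaries | b ≤ j.castSucc} := by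
  have : ({t | α.boundary t ≤ j.castSucc} : Finset _) = Iic (α.index j).castSucc := by
    ext t
    simp [boundary, Fin.le_def, sizeUpTo_le_iff_le_index]
  rw [boundaries, filter_map, card_map]
  simp only [Function.comp_def, RelEmbedding.coe_toEmbedding, this, Fin.card_Iic,
    Fin.val_castSucc]

end Composition

theorem card_boundaries_le_compositionAsSetEquiv_symm {n : ℕ} (s : Finset (Fin (n - 1)))
    (j : Fin n) :
    #{b ∈ ((compositionAsSetEquiv n).symm s).boundaries | b ≤ j.castSucc} =
      #{i ∈ s | i.val < j.val} + 1 := by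
  let shift : Fin (n - 1) ↪ Fin (n + 1) :=
    ⟨fun i => ⟨i + 1, by omega⟩, fun i i' h => by simpa [Fin.ext_iff] using h⟩
  have : {b ∈ ((compositionAsSetEquiv n).symm s).boundaries | b ≤ j.castSucc} =
      insert 0 ({i ∈ s | i.val < j.val}.map shift) := by
    ext b
    simp only [compositionAsSetEquiv, Equiv.coe_fn_symm_mk, Set.toFinset_ofPred, mem_filter,
      mem_univ, true_and, mem_insert, mem_map]
    constructor
    · rintro ⟨rfl | rfl | ⟨i, hi, hb⟩, hbj⟩
      · exact Or.inl rfl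
      · exact absurd hbj (by simp [Fin.le_iff_val_le_val])
      · rw [Fin.le_iff_val_le_val, hb, Fin.val_castSucc] at hbj
        exact Or.inr ⟨i, ⟨hi, hbj⟩, Fin.ext hb.symm⟩
    · rintro (rfl | ⟨i, ⟨hi, hij⟩, rfl⟩)
      · exact ⟨Or.inl rfl, Fin.zero_le _⟩
      · exact ⟨Or.inr (Or.inr ⟨i, hi, rfl⟩), Fin.le_iff_val_le_val.2 hij⟩
  rw [this, card_insert_of_notMem (by simp [shift, Fin.ext_iff, - Fin.val_eq_zero_iff]), card_map]

theorem depC_compositionAsSetEquiv_symm {n : ℕ} (s : Finset (Fin (n - 1))) :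
    depC ((compositionAsSetEquiv n).symm s).toComposition =
      ∑ j : Fin n, #{i ∈ s | i.val < j.val} := by
  rw [Composition.depC_eq_sum_index]
  refine Fintype.sum_congr _ _ fun j => ?_
  have := ((compositionAsSetEquiv n).symm s).toComposition.index_add_one_eq_card_boundaries j
  rw [CompositionAsSet.toComposition_boundaries,
    card_boundaries_le_compositionAsSetEquiv_symm] at this
  omega

namespace SYT

variable {n : ℕ} (T : SYT n)

/-- The row of entry `k` (0-indexed), with junk value `0` for `k ≥ n`. -/
def row (k : ℕ) : ℕ := if h : k < n then (T.1 ⟨k, h⟩).1 else 0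

def desCount (k : ℕ) : ℕ := #{i ∈ desSet n T | i.val < k}

theorem row_coe (k : Fin n) : T.row k = (T.1 k).1 := by simp [row]

theorem depC_desComp : depC (desComp n T) = ∑ k ∈ range n, T.desCount k := by
  rw [desComp, depC_compositionAsSetEquiv_symm, ← Fin.sum_univ_eq_sum_range]
  rfl

theorem mem_desSet_iff (i : Fin (n - 1)) : i ∈ desSet n T ↔ T.row i < T.row (i + 1) := by
  have := i.isLt
  simp [desSet, row, show (i : ℕ) < n by omega, show (i : ℕ) + 1 < n by omega]

theorem desCount_succ (k : ℕ) :
    T.desCount (k + 1) = T.desCount k + if T.row k < T.row (k + 1) then 1 else 0 := by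
  have hsplit : {i ∈ desSet n T | i.val < k + 1} =
      {i ∈ desSet n T | i.val < k} ∪ {i ∈ desSet n T | i.val = k} := by
    ext i
    simp only [mem_filter, mem_union, Nat.lt_succ_iff_lt_or_eq, and_or_left]
  rw [desCount, desCount, hsplit, card_union_of_disjoint
    (disjoint_filter.2 fun _ _ hlt heq => hlt.ne heq)]
  congr 1
  rcases lt_or_ge (k + 1) n with hk | hk
  · have : {i ∈ desSet n T | i.val = k} = {i ∈ desSet n T | i = ⟨k, by omega⟩} :=
      filter_congr fun i _ => by simp [Fin.ext_iff]
    rw [this, filter_eq', apply_ite card, card_singleton, card_empty]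
    exact if_congr (T.mem_desSet_iff _) rfl rfl
  · have : {i ∈ desSet n T | i.val = k} = ∅ := filter_eq_empty_iff.2 fun i _ => by omega
    simp [this, row, show ¬ k + 1 < n by omega]

theorem desCount_mono : Monotone T.desCount := fun _ _ h =>
  card_le_card (monotone_filter_right _ fun _ _ hi => hi.trans_le h)

theorem desCount_lt_of_row_lt {j k : ℕ} (hjk : j ≤ k) (h : T.row j < T.row k) :
    T.desCount j < T.desCount k := by
  induction k, hjk using Nat.le_induction with
  | base => exact absurd h (lt_irrefl _)
  | succ k hjk ih =>
    rw [desCount_succ]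
    split_ifs with hdesc
    · exact Nat.lt_succ_of_le (T.desCount_mono hjk)
    · exact ih (h.trans_le (not_lt.1 hdesc))

theorem exists_lt_row_add_one_eq {k : ℕ} (hk : 0 < T.row k) :
    ∃ j < k, T.row j + 1 = T.row k := by
  have hkn : k < n := by
    by_contra h
    simp [row, h] at hk
  set K : Fin n := ⟨k, hkn⟩
  rw [show T.row k = (T.1 K).1 from T.row_coe K] at hk ⊢
  obtain ⟨j, hj⟩ := T.2.2.1 K ⟨(T.1 K).1 - 1, by omega⟩ (T.1 K).2
    (Fin.le_iff_val_le_val.2 (Nat.sub_le _ _)) le_rfl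
  have hjrow : ((T.1 j).1 : ℕ) = (T.1 K).1 - 1 := by rw [hj]
  have hjK : j < K := T.2.2.2 j K (Or.inr ⟨by rw [hj], by rw [Fin.lt_def]; omega⟩)
  exact ⟨j, hjK, by rw [T.row_coe]; omega⟩

theorem row_le_desCount (k : ℕ) : T.row k ≤ T.desCount k := by
  induction k using Nat.strong_induction_on with
  | _ k ih =>
    rcases Nat.eq_zero_or_pos (T.row k) with h | h
    · exact h ▸ Nat.zero_le _
    · obtain ⟨j, hjk, hj⟩ := T.exists_lt_row_add_one_eq h
      have := T.desCount_lt_of_row_lt hjk.le (by omega)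
      have := ih j hjk
      omega

theorem exists_eq_iff_lt_rowLen (ρ b : Fin n) :
    (∃ m, T.1 m = (ρ, b)) ↔ (b : ℕ) < rowLen n T ρ := by
  let cols := (univ.filter fun m => (T.1 m).1 = ρ).image fun m => (T.1 m).2
  have hcard : #cols = rowLen n T ρ := card_image_of_injOn fun m hm m' hm' h =>
    T.2.1 (Prod.ext ((mem_filter.1 hm).2.trans (mem_filter.1 hm').2.symm) h)
  have hmem : ∀ b, b ∈ cols ↔ ∃ m, T.1 m = (ρ, b) := fun b => by
    simp [cols, Prod.ext_iff]
  have hlower : IsLowerSet (cols : Set (Fin n)) := fun x y hyx hx => by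
    obtain ⟨m, hm⟩ := (hmem x).1 hx
    obtain ⟨j, hj⟩ := T.2.2.1 m ρ y (by rw [hm]) (by rw [hm]; exact hyx)
    exact (hmem y).2 ⟨j, hj⟩
  rw [← hmem, Fin.mem_iff_lt_card_of_isLowerSet hlower, hcard]

theorem sum_row_eq_sum_mul_rowLen :
    ∑ k ∈ range n, T.row k = ∑ a : Fin n, (a : ℕ) * rowLen n T a := by
  rw [← Fin.sum_univ_eq_sum_range]
  simp_rw [T.row_coe]
  rw [← sum_fiberwise' univ (fun k => (T.1 k).1) (fun a => (a : ℕ))]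
  refine Fintype.sum_congr _ _ fun a => ?_
  rw [sum_const, smul_eq_mul, mul_comm, rowLen]

theorem isLowerSet_rowLen_pos :
    IsLowerSet ((univ.filter fun a => 0 < rowLen n T a : Finset (Fin n)) : Set (Fin n)) := by
  intro a b hba ha
  simp only [coe_filter, mem_univ, true_and, Set.mem_ofPred_eq, rowLen, card_pos,
    filter_nonempty_iff] at ha ⊢
  obtain ⟨m, rfl⟩ := ha
  obtain ⟨j, hj⟩ := T.2.2.1 m b (T.1 m).2 hba le_rfl
  exact ⟨j, by rw [hj]⟩

theorem exists_rowLen_lt_of_desCount_eq {K : ℕ} (hK : K < n)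
    (hexcess : T.desCount K = T.row K + 1)
    (hother : ∀ k < n, k ≠ K → T.desCount k = T.row k) :
    ∃ a b : Fin n, 0 < rowLen n T a ∧ rowLen n T a < rowLen n T b := by
  have hK0 : K ≠ 0 := by
    rintro rfl
    simp [desCount] at hexcess
  have hprev : T.row (K - 1) = T.row K + 1 := by
    have h := T.desCount_succ (K - 1)
    rw [Nat.sub_add_cancel (Nat.pos_of_ne_zero hK0), hexcess,
      hother (K - 1) (by omega) (by omega)] at h
    split_ifs at h <;> omega
  have hafter : ∀ k, K < k → k < n → T.row K + 2 ≤ T.row k := by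
    intro k hKk hk
    have hnext : T.row K + 2 ≤ T.row (K + 1) := by
      have h := T.desCount_succ K
      rw [hexcess, hother (K + 1) (by omega) (by omega)] at h
      split_ifs at h with hdesc <;> omega
    calc T.row K + 2 ≤ T.row (K + 1) := hnext
      _ = T.desCount (K + 1) := (hother _ (by omega) (by omega)).symm
      _ ≤ T.desCount k := T.desCount_mono hKk
      _ = T.row k := hother k hk (by omega)
  set KF : Fin n := ⟨K, hK⟩
  set PF : Fin n := ⟨K - 1, by omega⟩
  have hKrow : T.row K = (T.1 KF).1 := T.row_coe KF
  have hProw : T.row (K - 1) = (T.1 PF).1 := T.row_coe PF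
  have hPpos : 0 < rowLen n T (T.1 PF).1 :=
    (Nat.zero_le _).trans_lt ((T.exists_eq_iff_lt_rowLen _ _).1 ⟨PF, rfl⟩)
  have hKcol : ((T.1 KF).2 : ℕ) < rowLen n T (T.1 KF).1 :=
    (T.exists_eq_iff_lt_rowLen _ _).1 ⟨KF, rfl⟩
  -- The cell below `K` cannot be filled: its entry would exceed `K` but lie only one row below it.
  refine ⟨(T.1 PF).1, (T.1 KF).1, hPpos, lt_of_le_of_lt (not_lt.1 fun hlt => ?_) hKcol⟩
  obtain ⟨m, hm⟩ := (T.exists_eq_iff_lt_rowLen _ _).2 hlt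
  have hmrow : (T.1 m).1 = (T.1 PF).1 := by rw [hm]
  have hKm : KF < m := T.2.2.2 KF m (Or.inr ⟨by rw [hm], by rw [hmrow, Fin.lt_def]; omega⟩)
  have := hafter m hKm m.isLt
  rw [T.row_coe, hmrow] at this
  omega

section Rectangle

variable {T} {c r : ℕ}

theorem rowLen_eq_of_pos (hshape : rowMult n T = Multiset.replicate r c)
    {a : Fin n} (ha : 0 < rowLen n T a) : rowLen n T a = c := by
  have : rowLen n T a ∈ rowMult n T :=
    Multiset.mem_filter.2 ⟨Multiset.mem_map_of_mem _ (mem_univ a), ha⟩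
  rw [hshape] at this
  exact Multiset.eq_of_mem_replicate this

theorem card_rowLen_pos (hshape : rowMult n T = Multiset.replicate r c)
    : #(univ.filter fun a => 0 < rowLen n T a) = r := by
  have := congrArg Multiset.card hshape
  rwa [rowMult, Multiset.filter_map, Multiset.card_map, Multiset.card_replicate] at this

theorem rowLen_pos_iff (hshape : rowMult n T = Multiset.replicate r c)
    (a : Fin n) : 0 < rowLen n T a ↔ (a : ℕ) < r := by
  rw [← card_rowLen_pos hshape, ← Fin.mem_iff_lt_card_of_isLowerSet T.isLowerSet_rowLen_pos]
  simp

theorem sum_row_eq_of_rowMult (hshape : rowMult n T = Multiset.replicate r c)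
    : ∑ k ∈ range n, T.row k = ∑ i ∈ range r, i * c := by
  have hrn : r ≤ n := card_rowLen_pos hshape ▸ (card_le_univ _).trans_eq (Fintype.card_fin n)
  calc ∑ k ∈ range n, T.row k
      = ∑ a : Fin n, if (a : ℕ) < r then (a : ℕ) * c else 0 := by
        rw [sum_row_eq_sum_mul_rowLen]
        refine Fintype.sum_congr _ _ fun a => ?_
        by_cases ha : 0 < rowLen n T a
        · rw [if_pos ((rowLen_pos_iff hshape a).1 ha), rowLen_eq_of_pos hshape ha]
        · rw [if_neg (mt (rowLen_pos_iff hshape a).2 ha), Nat.eq_zero_of_not_pos ha, mul_zero]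
    _ = ∑ i ∈ range r, i * c := by
        rw [Fin.sum_univ_eq_sum_range (fun i => if i < r then i * c else 0), ← sum_filter]
        congr 1
        ext i
        simp only [mem_filter, mem_range]
        omega

end Rectangle
end SYT

theorem stmt18_general (n c r : ℕ) (T : SYT n) (hshape : rowMult n T = Multiset.replicate r c) :
    depC (desComp n T) ≠ (∑ i ∈ Finset.range r, i * c) + 1 := by
  intro hdep
  obtain ⟨K, hK, hexcess, hother⟩ := exists_eq_add_one_of_sum_eq_sum_add_one
    (fun k _ => T.row_le_desCount k)
    (by rw [← T.depC_desComp, T.sum_row_eq_of_rowMult hshape, hdep])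
  obtain ⟨a, b, ha, hab⟩ := T.exists_rowLen_lt_of_desCount_eq (mem_range.1 hK) hexcess
    fun k hk => hother k (mem_range.2 hk)
  have hb := SYT.rowLen_eq_of_pos hshape (ha.trans hab)
  rw [SYT.rowLen_eq_of_pos hshape ha, hb] at hab
  exact lt_irrefl c hab

/-- For a rectangular partition `λ = (c^r)` with `c, r ≥ 2`, no standard Young tableau
of shape `λ` has depth `dep(λ) + 1` (where `dep(λ) = Σ_{i<r} i·c`); i.e. the coefficient
of `q^{dep(λ)+1}` in the fake degree polynomial `Σ_T q^{dep(des T)}` vanishes. -/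
theorem stmt18 (n c r : ℕ) (hc : 2 ≤ c) (hr : 2 ≤ r) (hn : n = r * c)
    (T : SYT n) (hshape : rowMult n T = Multiset.replicate r c) :
    depC (desComp n T) ≠ (∑ i ∈ Finset.range r, i * c) + 1 :=
  stmt18_general n c r T hshape
end
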